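/- arXiv:1810.08107 — 2 statements merged into one kernel-verified Lean document; each statement's English description precedes it below -/
import Mathlib

section
/- For any fixed integer a ≥ 1 and any integer s ≥ (16a)², we have ∑_{i=1}^{s} i^a · s_(i) / s^i ≤ 5 · (2a)^{a/2} · s^{(a+1)/2}, where s_(i) = s(s−1)⋯(s−i+1) denotes the falling factorial. -/
/-!
Put `t = √(2as)`, so that the right-hand side is `5 tᵃ √s`, and split the sum at `m = ⌈t⌉`.
Below `m` each term is at most `iᵃ` because `s_(i) ≤ sⁱ`, and `∑_{i<m} iᵃ ≤ mᵃ⁺¹ / (a + 1)`.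
From `m` on, consecutive terms have ratio `(1 + 1/i)ᵃ (1 - i/s) ≤ exp (a/i - i/s) ≤ exp (-a/t)`,
so the tail is dominated by a geometric series and is at most `mᵃ (1 + t/a)`.
As `t ≥ 16a`, `mᵃ ≤ (t + 1)ᵃ ≤ (16/15) tᵃ`, and both `m / (a + 1)` and `t / a` are `O(√s)`.
-/

open Finset Real

theorem sum_range_le_div_one_sub_of_le_mul {K : Type*} [Field K] [LinearOrder K]
    [IsStrictOrderedRing K] {f : ℕ → K} {r : K} (hr : r < 1) (hf₀ : ∀ k, 0 ≤ f k)
    (hf : ∀ k, f (k + 1) ≤ r * f k) (n : ℕ) :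
    ∑ k ∈ range n, f k ≤ f 0 / (1 - r) := by
  have h₁r : 0 < 1 - r := sub_pos.mpr hr
  suffices key : ∀ n, ∑ k ∈ range n, f k + f n / (1 - r) ≤ f 0 / (1 - r) from
    (le_add_of_nonneg_right (div_nonneg (hf₀ n) h₁r.le)).trans (key n)
  intro n
  induction n with
  | zero => simp
  | succ n ih =>
    have step : f n + f (n + 1) / (1 - r) ≤ f n / (1 - r) := by
      rw [add_div' _ _ _ h₁r.ne', div_le_div_iff_of_pos_right h₁r]
      linarith [hf n]
    rw [sum_range_succ]
    linarith

theorem add_one_pow_le_exp_div_mul_pow (n : ℕ) {x : ℝ} (hx : 0 < x) :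
    (x + 1) ^ n ≤ exp (n / x) * x ^ n := by
  have h : x + 1 ≤ x * exp x⁻¹ := by
    have := mul_le_mul_of_nonneg_left (add_one_le_exp x⁻¹) hx.le
    rwa [mul_add, mul_inv_cancel₀ hx.ne', mul_one, add_comm] at this
  calc (x + 1) ^ n ≤ (x * exp x⁻¹) ^ n := by gcongr
    _ = exp (n / x) * x ^ n := by rw [mul_pow, ← exp_nat_mul, div_eq_mul_inv, mul_comm]

theorem inv_one_sub_exp_neg_le {x : ℝ} (hx : 0 < x) : (1 - exp (-x))⁻¹ ≤ 1 + x⁻¹ := by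
  have h : exp (-x) ≤ (x + 1)⁻¹ := by
    rw [exp_neg]
    exact inv_anti₀ (by positivity) (add_one_le_exp x)
  have h' : (1 + x⁻¹)⁻¹ ≤ 1 - exp (-x) := by
    calc (1 + x⁻¹)⁻¹ = 1 - (x + 1)⁻¹ := by field_simp; ring
      _ ≤ 1 - exp (-x) := by linarith
  calc (1 - exp (-x))⁻¹ ≤ ((1 + x⁻¹)⁻¹)⁻¹ := inv_anti₀ (by positivity) h'
    _ = 1 + x⁻¹ := inv_inv _

theorem rpow_div_two_mul_rpow_succ_div_two (n : ℕ) {x y : ℝ} (hx : 0 ≤ x) (hy : 0 ≤ y) :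
    x ^ ((n : ℝ) / 2) * y ^ (((n : ℝ) + 1) / 2) = √(x * y) ^ n * √y := by
  have hx' : x ^ ((n : ℝ) / 2) = √x ^ n := by
    rw [sqrt_eq_rpow, ← rpow_natCast, ← rpow_mul hx]; ring_nf
  have hy' : y ^ (((n : ℝ) + 1) / 2) = √y ^ (n + 1) := by
    rw [sqrt_eq_rpow, ← rpow_natCast, ← rpow_mul hy]; push_cast; ring_nf
  rw [hx', hy', sqrt_mul hx, mul_pow, pow_succ]
  ring

noncomputable def laplaceTerm (a s i : ℕ) : ℝ :=
  (i : ℝ) ^ a * (s.descFactorial i : ℝ) / (s : ℝ) ^ i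

theorem laplaceTerm_nonneg (a s i : ℕ) : 0 ≤ laplaceTerm a s i := by
  unfold laplaceTerm; positivity

theorem laplaceTerm_le_pow (a s i : ℕ) : laplaceTerm a s i ≤ (i : ℝ) ^ a := by
  refine div_le_of_le_mul₀ (by positivity) (by positivity) ?_
  gcongr
  exact_mod_cast Nat.descFactorial_le_pow s i

theorem natCast_sub_le_mul_exp_neg {s : ℕ} (hs : 0 < s) (i : ℕ) :
    ((s - i : ℕ) : ℝ) ≤ s * exp (-(i / s)) := by
  rcases le_total i s with h | h
  · have hs' : (0 : ℝ) < s := by exact_mod_cast hs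
    calc ((s - i : ℕ) : ℝ) = s * (1 - i / s) := by push_cast [h]; field_simp
      _ ≤ s * exp (-(i / s)) := by gcongr; exact one_sub_le_exp_neg _
  · rw [Nat.sub_eq_zero_of_le h, Nat.cast_zero]
    positivity

theorem laplaceTerm_succ_le (a : ℕ) {s i : ℕ} (hs : 0 < s) (hi : 0 < i) :
    laplaceTerm a s (i + 1) ≤ exp (a / i - i / s) * laplaceTerm a s i := by
  have hs' : (0 : ℝ) < s := by exact_mod_cast hs
  have hi' : (0 : ℝ) < i := by exact_mod_cast hi
  unfold laplaceTerm
  rw [Nat.descFactorial_succ, pow_succ]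
  push_cast
  calc ((i : ℝ) + 1) ^ a * (((s - i : ℕ) : ℝ) * s.descFactorial i) / (s ^ i * s)
      ≤ (exp (a / i) * i ^ a) * ((s * exp (-(i / s))) * s.descFactorial i) / (s ^ i * s) := by
        gcongr
        · exact add_one_pow_le_exp_div_mul_pow a hi'
        · exact natCast_sub_le_mul_exp_neg hs i
    _ = exp (a / i - i / s) * (i ^ a * s.descFactorial i / s ^ i) := by
        rw [sub_eq_add_neg, exp_add]
        field_simp

theorem sum_Ico_one_laplaceTerm_le (a s : ℕ) {m : ℕ} (hm : 1 ≤ m) :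
    ∑ i ∈ Ico 1 m, laplaceTerm a s i ≤ (m : ℝ) ^ (a + 1) / (a + 1) := by
  calc ∑ i ∈ Ico 1 m, laplaceTerm a s i ≤ ∑ i ∈ Ico 1 m, (i : ℝ) ^ a :=
        sum_le_sum fun i _ ↦ laplaceTerm_le_pow a s i
    _ ≤ ∫ x in (1 : ℕ)..(m : ℕ), x ^ a :=
        MonotoneOn.sum_le_integral_Ico hm fun x hx y _ hxy ↦
          pow_le_pow_left₀ (zero_le_one.trans (by exact_mod_cast hx.1)) hxy a
    _ ≤ (m : ℝ) ^ (a + 1) / (a + 1) := by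
        rw [integral_pow]
        gcongr
        simp

theorem sum_Ico_laplaceTerm_le {a s : ℕ} (ha : 1 ≤ a) {t : ℝ} (ht : 0 < t)
    (hts : t ^ 2 = 2 * a * s) {m : ℕ} (hm : t ≤ m) (n : ℕ) :
    ∑ i ∈ Ico m n, laplaceTerm a s i ≤ (m : ℝ) ^ a * (1 + t / a) := by
  have ha' : (0 : ℝ) < a := by exact_mod_cast ha
  have hs : 0 < s := by
    have : (0 : ℝ) < 2 * a * s := by rw [← hts]; positivity
    exact_mod_cast pos_of_mul_pos_right this (by positivity)
  have hs' : (0 : ℝ) < s := by exact_mod_cast hs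
  have hm₀ : 0 < m := by exact_mod_cast ht.trans_le hm
  -- `t / s = 2a / t`, so `a / i - i / s ≤ a / t - 2a / t` once `i ≥ t`
  have ratio : ∀ i, m ≤ i → laplaceTerm a s (i + 1) ≤ exp (-(a / t)) * laplaceTerm a s i := by
    intro i hi
    have hti : t ≤ i := hm.trans (by exact_mod_cast hi)
    refine (laplaceTerm_succ_le a hs (hm₀.trans_le hi)).trans
      (mul_le_mul_of_nonneg_right (exp_le_exp.mpr ?_) (laplaceTerm_nonneg a s i))
    have h₁ : (a : ℝ) / i ≤ a / t := by gcongr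
    have h₂ : 2 * a / t ≤ (i : ℝ) / s := by
      rw [div_le_div_iff₀ ht hs']
      nlinarith
    have h₃ : 2 * (a : ℝ) / t = a / t + a / t := by ring
    linarith
  have hr : exp (-(a / t)) < 1 := exp_lt_one_iff.mpr (neg_lt_zero.mpr (div_pos ha' ht))
  rw [sum_Ico_eq_sum_range]
  calc ∑ k ∈ range (n - m), laplaceTerm a s (m + k)
      ≤ laplaceTerm a s (m + 0) / (1 - exp (-(a / t))) :=
        sum_range_le_div_one_sub_of_le_mul (f := fun k ↦ laplaceTerm a s (m + k)) hr
          (fun k ↦ laplaceTerm_nonneg a s _)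
          (fun k ↦ by simpa only [← add_assoc] using ratio (m + k) (Nat.le_add_right m k)) _
    _ ≤ (m : ℝ) ^ a * (1 + t / a) := by
        rw [div_eq_mul_inv, add_zero]
        refine mul_le_mul (laplaceTerm_le_pow a s m)
          (by simpa only [inv_div] using inv_one_sub_exp_neg_le (div_pos ha' ht))
          (inv_nonneg.mpr (sub_nonneg.mpr hr.le)) (by positivity)

theorem add_one_pow_le_sixteen_div_fifteen_mul_pow {a : ℕ} {t : ℝ} (ht₀ : 0 < t) (ht : 16 * a ≤ t) :
    (t + 1) ^ a ≤ 16 / 15 * t ^ a := by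
  have hx : a / t ≤ (1 / 16 : ℝ) := by rw [div_le_iff₀ ht₀]; linarith
  calc (t + 1) ^ a ≤ exp (a / t) * t ^ a := add_one_pow_le_exp_div_mul_pow a ht₀
    _ ≤ 1 / (1 - a / t) * t ^ a := by
        gcongr
        exact exp_bound_div_one_sub_of_interval (by positivity) (by linarith)
    _ ≤ 1 / (1 - 1 / 16) * t ^ a := by gcongr
    _ = 16 / 15 * t ^ a := by norm_num

theorem sum_Icc_laplaceTerm_le {a s : ℕ} (ha : 1 ≤ a) {t : ℝ} (hts : t ^ 2 = 2 * a * s)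
    (ht : 16 * a ≤ t) : ∑ i ∈ Icc 1 s, laplaceTerm a s i ≤ 5 * t ^ a * √s := by
  have ha' : (1 : ℝ) ≤ a := by exact_mod_cast ha
  have ht₀ : 0 < t := by linarith
  have hts' : t ^ 2 = 2 * a * √s ^ 2 := by rw [sq_sqrt (Nat.cast_nonneg s), hts]
  have hs : 128 ≤ (s : ℝ) := by nlinarith
  have hsqrt₁₀ : 10 ≤ √s := le_sqrt_of_sq_le (by linarith)
  set m := ⌈t⌉₊
  have htm : t ≤ m := Nat.le_ceil t
  have hmt : (m : ℝ) ≤ t + 1 := (Nat.ceil_lt_add_one ht₀.le).le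
  have hm₁ : 1 ≤ m := by exact_mod_cast (show (1 : ℝ) ≤ m by linarith)
  have hms : m ≤ s + 1 := Nat.ceil_le.mpr (by push_cast; nlinarith)
  have hmpow : (m : ℝ) ^ a ≤ 16 / 15 * t ^ a :=
    (pow_le_pow_left₀ (Nat.cast_nonneg m) hmt a).trans (add_one_pow_le_sixteen_div_fifteen_mul_pow ht₀ ht)
  have hbracket : (t + 1) / (a + 1) + (1 + t / a) ≤ 75 / 16 * √s := by
    have h₁ : t / (a + 1) ≤ √s := by
      rw [div_le_iff₀ (by positivity), ← pow_le_pow_iff_left₀ ht₀.le (by positivity) two_ne_zero]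
      nlinarith [sq_nonneg ((a : ℝ) - 1)]
    have h₂ : t / a ≤ 3 / 2 * √s := by
      rw [div_le_iff₀ (by positivity), ← pow_le_pow_iff_left₀ ht₀.le (by positivity) two_ne_zero]
      nlinarith
    have h₃ : 1 / ((a : ℝ) + 1) ≤ 1 := by rw [div_le_one (by positivity)]; linarith
    rw [add_div]
    linarith
  rw [← Ico_add_one_right_eq_Icc, ← sum_Ico_consecutive _ hm₁ hms]
  calc ∑ i ∈ Ico 1 m, laplaceTerm a s i + ∑ i ∈ Ico m (s + 1), laplaceTerm a s i
      ≤ (m : ℝ) ^ (a + 1) / (a + 1) + (m : ℝ) ^ a * (1 + t / a) :=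
        add_le_add (sum_Ico_one_laplaceTerm_le a s hm₁) (sum_Ico_laplaceTerm_le ha ht₀ hts htm _)
    _ = (m : ℝ) ^ a * (m / (a + 1) + (1 + t / a)) := by ring
    _ ≤ (16 / 15 * t ^ a) * ((t + 1) / (a + 1) + (1 + t / a)) := by gcongr
    _ ≤ (16 / 15 * t ^ a) * (75 / 16 * √s) := by gcongr
    _ = 5 * t ^ a * √s := by ring

/-- For fixed integer `a ≥ 1` and integer `s ≥ (16a)²`,
`∑_{i=1}^s i^a s_(i) / s^i ≤ 5 (2a)^{a/2} s^{(a+1)/2}`,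
where `s_(i)` is the falling factorial. -/
theorem laplace_sum_bound (a s : ℕ) (ha : 1 ≤ a) (hs : (16 * a) ^ 2 ≤ s) :
    ∑ i ∈ Finset.Icc 1 s, (i : ℝ) ^ a * (s.descFactorial i : ℝ) / (s : ℝ) ^ i
      ≤ 5 * (2 * (a : ℝ)) ^ ((a : ℝ) / 2) * (s : ℝ) ^ (((a : ℝ) + 1) / 2) := by
  have hs' : (16 * a : ℝ) ^ 2 ≤ 2 * a * s := by
    have : ((16 * a) ^ 2 : ℝ) ≤ s := by exact_mod_cast hs
    have ha' : (1 : ℝ) ≤ a := by exact_mod_cast ha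
    nlinarith
  rw [mul_assoc, rpow_div_two_mul_rpow_succ_div_two a (by positivity) (Nat.cast_nonneg s),
    ← mul_assoc]
  exact sum_Icc_laplaceTerm_le ha (sq_sqrt (by positivity)) (le_sqrt_of_sq_le hs')
end

section
/- Let c₀ ≥ 1 be an integer and for s ≥ 1 define F_s = ∑_{r=1}^{s} c₀^{s−r} s^{s−r−1} / ((r−1)!(s−r)!). Then c₀^{s−1} s^{s−1}/s! ≤ F_s ≤ c₀^{s−1} s^{s−1} e^{1/c₀} / s!. -/
/-!
Since `s! = (s - r)! · s(s-1)⋯(s-r+1)`, the `r`-th summand equals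
`c₀^(s-1) s^(s-1) / s!` times `c₀^-(r-1) / (r-1)!` times the factor `s(s-1)⋯(s-r+1) / s^r`,
which lies in `[0, 1]` and equals `1` at `r = 1`. The `r = 1` summand alone gives the lower
bound; dropping the factor leaves a partial sum of the exponential series at `1 / c₀`.
-/

open Finset Nat

lemma descFactorial_div_pow_le_one (s r : ℕ) : (s.descFactorial r : ℝ) / (s : ℝ) ^ r ≤ 1 :=
  div_le_one_of_le₀ (by exact_mod_cast descFactorial_le_pow s r) (by positivity)

lemma summand_eq {c : ℝ} (hc : c ≠ 0) {s r : ℕ} (hr : 1 ≤ r) (hrs : r ≤ s) :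
    c ^ (s - r) * (s : ℝ) ^ ((s : ℤ) - (r : ℤ) - 1) / ((r - 1)! * (s - r)! : ℝ)
      = c ^ (s - 1) * (s : ℝ) ^ (s - 1) / (s ! : ℝ)
        * (c⁻¹ ^ (r - 1) / (r - 1)! * ((s.descFactorial r : ℝ) / (s : ℝ) ^ r)) := by
  have hs : (s : ℝ) ≠ 0 := by exact_mod_cast (by omega : s ≠ 0)
  have hfact : (s ! : ℝ) = (s - r)! * s.descFactorial r := by
    exact_mod_cast (factorial_mul_descFactorial hrs).symm
  have hcpow : c ^ (s - 1) = c ^ (s - r) * c ^ (r - 1) := by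
    rw [← pow_add]; congr 1; omega
  have hspow : (s : ℝ) ^ ((s : ℤ) - (r : ℤ) - 1) = (s : ℝ) ^ (s - 1) / (s : ℝ) ^ r := by
    rw [← zpow_natCast, ← zpow_natCast, ← zpow_sub₀ hs]
    congr 1; omega
  have hdesc : (s.descFactorial r : ℝ) ≠ 0 := by
    exact_mod_cast (descFactorial_pos.mpr hrs).ne'
  rw [hfact, hcpow, hspow, inv_pow]
  field_simp

lemma sum_Icc_exp_weight_le_exp {x : ℝ} (hx : 0 ≤ x) (s : ℕ) :
    ∑ r ∈ Icc 1 s, x ^ (r - 1) / (r - 1)! * ((s.descFactorial r : ℝ) / (s : ℝ) ^ r)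
      ≤ Real.exp x :=
  calc ∑ r ∈ Icc 1 s, x ^ (r - 1) / (r - 1)! * ((s.descFactorial r : ℝ) / (s : ℝ) ^ r)
      ≤ ∑ r ∈ Icc 1 s, x ^ (r - 1) / (r - 1)! := by
        refine sum_le_sum fun r _ => mul_le_of_le_one_right (by positivity) ?_
        exact descFactorial_div_pow_le_one s r
    _ = ∑ k ∈ range s, x ^ k / k ! := by
        rw [← Ico_add_one_right_eq_Icc, sum_Ico_eq_sum_range]
        simp
    _ ≤ Real.exp x := Real.sum_le_exp_of_nonneg hx s

lemma one_le_sum_Icc_exp_weight {x : ℝ} (hx : 0 ≤ x) {s : ℕ} (hs : 1 ≤ s) :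
    1 ≤ ∑ r ∈ Icc 1 s, x ^ (r - 1) / (r - 1)! * ((s.descFactorial r : ℝ) / (s : ℝ) ^ r) := by
  have hs0 : (s : ℝ) ≠ 0 := by exact_mod_cast (by omega : s ≠ 0)
  refine le_of_eq_of_le ?_ (single_le_sum (fun r _ => by positivity) (mem_Icc.mpr ⟨le_rfl, hs⟩))
  simp [hs0]

/-- Let `c₀ ≥ 1` be an integer and for `s ≥ 1` define
`F_s = ∑_{r=1}^s c₀^(s-r) s^(s-r-1) / ((r-1)!(s-r)!)`. Then
`c₀^(s-1) s^(s-1)/s! ≤ F_s ≤ c₀^(s-1) s^(s-1) e^(1/c₀) / s!`. -/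
theorem F_s_bounds (c₀ s : ℕ) (hc : 1 ≤ c₀) (hs : 1 ≤ s) :
    (c₀ : ℝ) ^ (s - 1) * (s : ℝ) ^ (s - 1) / (Nat.factorial s : ℝ)
        ≤ ∑ r ∈ Finset.Icc 1 s,
            (c₀ : ℝ) ^ (s - r) * (s : ℝ) ^ ((s : ℤ) - (r : ℤ) - 1)
              / ((Nat.factorial (r - 1) : ℝ) * (Nat.factorial (s - r) : ℝ))
      ∧ ∑ r ∈ Finset.Icc 1 s,
            (c₀ : ℝ) ^ (s - r) * (s : ℝ) ^ ((s : ℤ) - (r : ℤ) - 1)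
              / ((Nat.factorial (r - 1) : ℝ) * (Nat.factorial (s - r) : ℝ))
          ≤ (c₀ : ℝ) ^ (s - 1) * (s : ℝ) ^ (s - 1) * Real.exp (1 / (c₀ : ℝ))
              / (Nat.factorial s : ℝ) := by
  have hc0 : (0 : ℝ) < c₀ := by exact_mod_cast hc
  have hx : (0 : ℝ) ≤ (c₀ : ℝ)⁻¹ := by positivity
  set A := (c₀ : ℝ) ^ (s - 1) * (s : ℝ) ^ (s - 1) / (s ! : ℝ) with hA_def
  have hA : 0 ≤ A := by positivity
  have hsum : ∑ r ∈ Icc 1 s, (c₀ : ℝ) ^ (s - r) * (s : ℝ) ^ ((s : ℤ) - (r : ℤ) - 1)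
        / ((r - 1)! * (s - r)! : ℝ)
      = A * ∑ r ∈ Icc 1 s,
          (c₀ : ℝ)⁻¹ ^ (r - 1) / (r - 1)! * ((s.descFactorial r : ℝ) / (s : ℝ) ^ r) := by
    rw [mul_sum]
    refine sum_congr rfl fun r hr => ?_
    exact summand_eq hc0.ne' (mem_Icc.mp hr).1 (mem_Icc.mp hr).2
  rw [hsum, one_div, mul_div_right_comm, ← hA_def]
  exact ⟨le_mul_of_one_le_right hA (one_le_sum_Icc_exp_weight hx hs),
    mul_le_mul_of_nonneg_left (sum_Icc_exp_weight_le_exp hx s) hA⟩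
end
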